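/- arXiv:1211.6266 — 3 statements merged into one kernel-verified Lean document; each statement's English description precedes it below -/
import Mathlib

section
/- Let H be a separable real Hilbert space and Y an H-valued Lévy process admitting a continuous Lévy exponent ρ : H → ℂ (E[exp(i⟨u, Y(t)⟩)] = exp(t·ρ(u)) for all t, u). Assume Y is symmetric (Y(t) and −Y(t) have the same law for every t), strictly α-stable for some α > 0 (Y(t^α) and t·Y(1) have the same law for every t ≥ 0), and nontrivial (P(Y(t) ≠ 0) > 0 for some t). Then α ∈ (0, 2], and there is a continuous function f : S_H → ℝ_+ on the unit sphere S_H := {x ∈ H : ‖x‖ = 1}, symmetric in the sense f(−v) = f(v), such that ρ(u) = −‖u‖^α · f(u/‖u‖) for every u ∈ H \ {0}; in particular ρ is real-valued, nonpositive, and satisfies ρ(t·u) = t^α·ρ(u) for all t ≥ 0 and u ∈ H. -/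
/-!
Symmetry makes every characteristic function `charFun (law (Y t))` real, so `ρ` is real-valued;
`‖exp ρ(u)‖ ≤ 1` makes it nonpositive, and `charFun (-u) = conj (charFun u)` makes it even.
Strict stability gives `exp ρ(s • u) = exp (s ^ α * ρ u)`, and `exp` is injective on `ℝ`, so
`ρ` is positively `α`-homogeneous; `f v = -ρ v` then gives the spherical representation.

If `α > 2`, each projection `X = ⟪u, Y 1⟫` satisfies
`1 - E cos (s X) = 1 - exp (s ^ α * ρ u) = o(s²)`. Since `2 (1 - cos (s x)) / s² → x²`,
Fatou's lemma gives `E X² = 0`, so `Y 1 = 0` a.s. and, by stability, `Y t = 0` a.s. for all `t`,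
contradicting nontriviality.
-/

open MeasureTheory ProbabilityTheory Filter Set
open scoped RealInnerProductSpace ENNReal NNReal

noncomputable section

/-- A function `f : ℝ → E` is càdlàg on `[0,∞)`: right-continuous with left limits. -/
def CadlagOn {E : Type*} [TopologicalSpace E] (f : ℝ → E) : Prop :=
  (∀ t : ℝ, 0 ≤ t → ContinuousWithinAt f (Set.Ici t) t) ∧
  (∀ t : ℝ, 0 < t → ∃ x : E, Filter.Tendsto f (nhdsWithin t (Set.Iio t)) (nhds x))

/-- A process has independent increments. -/
def HasIndepIncrements {Ω E : Type*} [MeasurableSpace Ω] [MeasurableSpace E] [Sub E]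
    (P : Measure Ω) (L : ℝ → Ω → E) : Prop :=
  ∀ (n : ℕ) (t : Fin (n + 1) → ℝ), (∀ i, 0 ≤ t i) → Monotone t →
    iIndepFun
      (fun (i : Fin n) => fun ω => L (t i.succ) ω - L (t i.castSucc) ω) P

/-- A process has stationary increments. -/
def HasStatIncrements {Ω E : Type*} [MeasurableSpace Ω] [MeasurableSpace E] [Sub E]
    (P : Measure Ω) (L : ℝ → Ω → E) : Prop :=
  ∀ s t : ℝ, 0 ≤ s → 0 ≤ t →
    Measure.map (fun ω => L (s + t) ω - L s ω) P = Measure.map (L t) P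

/-- A process is continuous in probability (stochastically continuous) on `[0,∞)`. -/
def ContinuousInProbability {Ω E : Type*} [MeasurableSpace Ω] [PseudoMetricSpace E]
    (P : Measure Ω) (L : ℝ → Ω → E) : Prop :=
  ∀ t : ℝ, 0 ≤ t → ∀ ε : ℝ, 0 < ε →
    Filter.Tendsto (fun s => P {ω | ε < dist (L s ω) (L t ω)})
      (nhdsWithin t (Set.Ici 0)) (nhds 0)

/-- An `E`-valued Lévy process: measurable, starts at `0` a.s., càdlàg paths,
independent and stationary increments, continuous in probability. -/
def IsLevyProcess {Ω E : Type*} [MeasurableSpace Ω] [NormedAddCommGroup E] [MeasurableSpace E]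
    (P : Measure Ω) (L : ℝ → Ω → E) : Prop :=
  (∀ t, Measurable (L t)) ∧
  (∀ᵐ ω ∂P, L 0 ω = 0) ∧
  (∀ ω, CadlagOn fun t => L t ω) ∧
  HasIndepIncrements P L ∧
  HasStatIncrements P L ∧
  ContinuousInProbability P L

open Topology Complex

lemma Complex.im_eq_zero_of_forall_im_exp_mul_eq_zero {z : ℂ}
    (h : ∀ t : ℝ, 0 ≤ t → (cexp (t * z)).im = 0) : z.im = 0 := by
  -- `|s * z.im| < 1 < π`, and on `(-π, π)` the sine vanishes only at `0`.
  set s := (|z.im| + 1)⁻¹ with hs_def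
  have hs : 0 < s := by positivity
  have hsin : Real.sin (s * z.im) = 0 := by
    simpa [Complex.exp_im, Real.exp_ne_zero] using h s hs.le
  have hlt : |s * z.im| < Real.pi := by
    rw [abs_mul, abs_of_pos hs, hs_def, inv_mul_lt_iff₀ (by positivity)]
    nlinarith [Real.pi_gt_three, abs_nonneg z.im]
  rw [Real.sin_eq_zero_iff_of_lt_of_lt (by linarith [neg_abs_le (s * z.im)])
    (lt_of_le_of_lt (le_abs_self _) hlt)] at hsin
  exact (mul_eq_zero.mp hsin).resolve_left hs.ne'

lemma Complex.eq_of_exp_eq_of_im_eq_zero {z w : ℂ} (hz : z.im = 0) (hw : w.im = 0)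
    (h : cexp z = cexp w) : z = w := by
  obtain ⟨n, hn⟩ := Complex.exp_eq_exp_iff_exists_int.mp h
  have : (n : ℝ) * (2 * Real.pi) = 0 := by
    simpa [hz, hw] using congrArg Complex.im hn
  simp only [mul_eq_zero, Int.cast_eq_zero, OfNat.ofNat_ne_zero, Real.pi_ne_zero, or_self,
    or_false] at this
  simpa [this] using hn

lemma Real.sin_sq_eq_sq_mul_sinc_sq (x : ℝ) : sin x ^ 2 = x ^ 2 * sinc x ^ 2 := by
  rcases eq_or_ne x 0 with rfl | hx
  · simp
  · rw [sinc_of_ne_zero hx]; field_simp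

lemma Real.tendsto_two_mul_one_sub_cos_mul_div_sq (x : ℝ) :
    Tendsto (fun t => 2 * (1 - cos (t * x)) / t ^ 2) (𝓝[≠] 0) (𝓝 (x ^ 2)) := by
  have hsinc : Tendsto (fun t => x ^ 2 * sinc (t * x / 2) ^ 2) (𝓝 0) (𝓝 (x ^ 2)) := by
    have := ((continuous_sinc.comp (by fun_prop : Continuous fun t : ℝ => t * x / 2)).pow 2
      |>.const_mul (x ^ 2)).tendsto 0
    simpa [sinc_zero] using this
  refine (hsinc.mono_left nhdsWithin_le_nhds).congr' ?_
  filter_upwards [self_mem_nhdsWithin] with t ht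
  have hcos : 1 - cos (t * x) = 2 * sin (t * x / 2) ^ 2 := by
    have h2 := cos_two_mul (t * x / 2)
    rw [show 2 * (t * x / 2) = t * x by ring] at h2
    linarith [sin_sq_add_cos_sq (t * x / 2)]
  rw [hcos, sin_sq_eq_sq_mul_sinc_sq]
  field_simp [show t ≠ 0 from ht]

lemma Real.tendsto_one_sub_exp_rpow_mul_div_sq {α c : ℝ} (hα : 2 < α) (hc : c ≤ 0) :
    Tendsto (fun t => (1 - Real.exp (t ^ α * c)) / t ^ 2) (𝓝[>] 0) (𝓝 0) := by
  have hpow : Tendsto (fun t : ℝ => -c * t ^ (α - 2)) (𝓝[>] 0) (𝓝 0) := by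
    have := ((Real.continuous_rpow_const (by linarith : 0 ≤ α - 2)).tendsto 0).const_mul (-c)
    rw [Real.zero_rpow (by linarith), mul_zero] at this
    exact this.mono_left nhdsWithin_le_nhds
  refine tendsto_of_tendsto_of_tendsto_of_le_of_le' tendsto_const_nhds hpow ?_ ?_
  · filter_upwards [self_mem_nhdsWithin] with t (ht : 0 < t)
    have : Real.exp (t ^ α * c) ≤ 1 :=
      Real.exp_le_one_iff.mpr (mul_nonpos_of_nonneg_of_nonpos (by positivity) hc)
    have : 0 ≤ 1 - Real.exp (t ^ α * c) := by linarith
    positivity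
  · filter_upwards [self_mem_nhdsWithin] with t (ht : 0 < t)
    rw [div_le_iff₀ (by positivity), Real.rpow_sub ht, Real.rpow_two]
    have := Real.add_one_le_exp (t ^ α * c)
    field_simp
    linarith

lemma ae_eq_zero_of_tendsto_one_sub_integral_cos_div_sq {Ω : Type*} [MeasurableSpace Ω]
    {μ : Measure Ω} [IsProbabilityMeasure μ] {X : Ω → ℝ} (hX : Measurable X)
    (h : Tendsto (fun t => (1 - ∫ ω, Real.cos (t * X ω) ∂μ) / t ^ 2) (𝓝[>] 0) (𝓝 0)) :
    X =ᵐ[μ] 0 := by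
  set g : ℝ → Ω → ℝ≥0∞ := fun t ω => ENNReal.ofReal (2 * (1 - Real.cos (t * X ω)) / t ^ 2)
  have hg_meas : ∀ t, Measurable (g t) := fun t => by fun_prop
  have hg_lim : ∀ ω, liminf (fun t => g t ω) (𝓝[>] 0) = ENNReal.ofReal (X ω ^ 2) := fun ω =>
    (ENNReal.tendsto_ofReal ((Real.tendsto_two_mul_one_sub_cos_mul_div_sq (X ω)).mono_left
      (nhdsWithin_mono _ fun _ ht => ne_of_gt ht : 𝓝[>] (0 : ℝ) ≤ 𝓝[≠] 0))).liminf_eq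
  have hg_int : ∀ t, ∫⁻ ω, g t ω ∂μ
      = ENNReal.ofReal (2 * ((1 - ∫ ω, Real.cos (t * X ω) ∂μ) / t ^ 2)) := fun t => by
    have hcos : Integrable (fun ω => Real.cos (t * X ω)) μ :=
      Integrable.of_bound (by fun_prop) 1 (ae_of_all _ fun ω => by simp [Real.abs_cos_le_one])
    rw [← ofReal_integral_eq_lintegral_ofReal]
    · congr 1
      rw [integral_div, integral_const_mul, integral_sub (integrable_const 1) hcos]
      simp only [integral_const, probReal_univ, smul_eq_mul, mul_one]
      ring
    · exact (((integrable_const 1).sub hcos).const_mul 2).div_const _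
    · exact ae_of_all _ fun ω => by have := Real.cos_le_one (t * X ω); positivity
  have hsq : ∫⁻ ω, ENNReal.ofReal (X ω ^ 2) ∂μ = 0 := by
    refine nonpos_iff_eq_zero.mp ?_
    calc ∫⁻ ω, ENNReal.ofReal (X ω ^ 2) ∂μ
        = ∫⁻ ω, liminf (fun t => g t ω) (𝓝[>] 0) ∂μ := by simp_rw [hg_lim]
      _ ≤ liminf (fun t => ∫⁻ ω, g t ω ∂μ) (𝓝[>] 0) := lintegral_liminf_le hg_meas
      _ = 0 := by
        simp_rw [hg_int]
        simpa using (ENNReal.tendsto_ofReal (h.const_mul 2)).liminf_eq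
  filter_upwards [(lintegral_eq_zero_iff (by fun_prop)).mp hsq] with ω hω
  simpa using hω

lemma charFun_map_eq_integral {E Ω : Type*} [NormedAddCommGroup E] [InnerProductSpace ℝ E]
    [MeasurableSpace E] [OpensMeasurableSpace E] [MeasurableSpace Ω] {P : Measure Ω}
    {X : Ω → E} (hX : AEMeasurable X P) (u : E) :
    charFun (P.map X) u = ∫ ω, cexp (I * ⟪u, X ω⟫) ∂P := by
  rw [charFun_apply, integral_map hX (by fun_prop)]
  simp_rw [real_inner_comm, mul_comm]

lemma charFun_map_neg {E : Type*} [NormedAddCommGroup E] [InnerProductSpace ℝ E]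
    [MeasurableSpace E] [BorelSpace E] (ν : Measure E) (u : E) :
    charFun (ν.map Neg.neg) u = charFun ν (-u) := by
  simpa using charFun_map_smul (μ := ν) (-1) u

lemma re_charFun_eq_integral_cos {E : Type*} [NormedAddCommGroup E] [InnerProductSpace ℝ E]
    [MeasurableSpace E] [OpensMeasurableSpace E] (ν : Measure E) [IsFiniteMeasure ν] (u : E) :
    (charFun ν u).re = ∫ x, Real.cos ⟪x, u⟫ ∂ν := by
  have hint : Integrable (fun x => cexp (⟪x, u⟫ * I)) ν :=
    Integrable.of_bound (by fun_prop) 1 (ae_of_all _ fun x => by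
      simp [Complex.norm_exp_ofReal_mul_I])
  calc (charFun ν u).re = ∫ x, (cexp (⟪x, u⟫ * I)).re ∂ν := (integral_re hint).symm
    _ = ∫ x, Real.cos ⟪x, u⟫ ∂ν := by simp only [Complex.exp_ofReal_mul_I_re]

section LevyExponent

variable {H : Type*} [NormedAddCommGroup H] [InnerProductSpace ℝ H] [MeasurableSpace H]
  {μ : ℝ → Measure H} {ρ : H → ℂ}

def HasLevyExponent (μ : ℝ → Measure H) (ρ : H → ℂ) : Prop :=
  ∀ t : ℝ, 0 ≤ t → ∀ u : H, charFun (μ t) u = cexp (t * ρ u)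

namespace HasLevyExponent

lemma im_eq_zero [BorelSpace H] (hρ : HasLevyExponent μ ρ)
    (hsym : ∀ t : ℝ, 0 ≤ t → (μ t).map Neg.neg = μ t) (u : H) : (ρ u).im = 0 := by
  refine im_eq_zero_of_forall_im_exp_mul_eq_zero fun t ht => ?_
  rw [← hρ t ht, ← Complex.conj_eq_iff_im, ← charFun_neg, ← charFun_map_neg, hsym t ht]

lemma re_nonpos (hρ : HasLevyExponent μ ρ) [IsProbabilityMeasure (μ 1)] (u : H) :
    (ρ u).re ≤ 0 := by
  have h := norm_charFun_le_one (μ := μ 1) u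
  rw [hρ 1 zero_le_one, Complex.norm_exp] at h
  simpa using h

lemma apply_neg (hρ : HasLevyExponent μ ρ) (hreal : ∀ u, (ρ u).im = 0) (u : H) :
    ρ (-u) = ρ u := by
  refine eq_of_exp_eq_of_im_eq_zero (hreal _) (hreal _) ?_
  have h := charFun_neg (μ := μ 1) u
  rw [hρ 1 zero_le_one, hρ 1 zero_le_one, ← Complex.exp_conj] at h
  simpa [Complex.conj_eq_iff_im.mpr (hreal u)] using h

lemma apply_smul [BorelSpace H] (hρ : HasLevyExponent μ ρ) (hreal : ∀ u, (ρ u).im = 0) {α : ℝ}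
    (hstable : ∀ s : ℝ, 0 ≤ s → μ (s ^ α) = (μ 1).map (s • ·)) {s : ℝ} (hs : 0 ≤ s) (u : H) :
    ρ (s • u) = (s ^ α : ℝ) * ρ u := by
  have h : cexp (1 * ρ (s • u)) = cexp ((s ^ α : ℝ) * ρ u) := by
    rw [← Complex.ofReal_one, ← hρ 1 zero_le_one, ← hρ _ (Real.rpow_nonneg hs α),
      hstable s hs, charFun_map_smul]
  simpa using eq_of_exp_eq_of_im_eq_zero (by simp [hreal]) (by simp [hreal]) h

lemma integral_cos_inner [BorelSpace H] [IsProbabilityMeasure (μ 1)] (hρ : HasLevyExponent μ ρ)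
    (hreal : ∀ u, (ρ u).im = 0) {α : ℝ}
    (hstable : ∀ s : ℝ, 0 ≤ s → μ (s ^ α) = (μ 1).map (s • ·)) {s : ℝ} (hs : 0 ≤ s) (u : H) :
    ∫ x, Real.cos (s * ⟪u, x⟫) ∂(μ 1) = Real.exp (s ^ α * (ρ u).re) := by
  have h := re_charFun_eq_integral_cos (μ 1) (s • u)
  simp_rw [inner_smul_right, real_inner_comm] at h
  rw [← h, hρ 1 zero_le_one, hρ.apply_smul hreal hstable hs, Complex.ofReal_one, one_mul,
    Complex.exp_re]
  simp [hreal u]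

lemma le_two [BorelSpace H] [SecondCountableTopology H] [∀ t, IsProbabilityMeasure (μ t)]
    (hρ : HasLevyExponent μ ρ) (hreal : ∀ u, (ρ u).im = 0) {α : ℝ} (hα : 0 < α)
    (hstable : ∀ s : ℝ, 0 ≤ s → μ (s ^ α) = (μ 1).map (s • ·))
    (hnontriv : ∃ t : ℝ, 0 ≤ t ∧ μ t {0}ᶜ ≠ 0) : α ≤ 2 := by
  by_contra! hα2
  have hproj (u : H) : (fun x => ⟪u, x⟫) =ᵐ[μ 1] 0 := by
    refine ae_eq_zero_of_tendsto_one_sub_integral_cos_div_sq (by fun_prop) ?_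
    refine (Real.tendsto_one_sub_exp_rpow_mul_div_sq hα2 (hρ.re_nonpos u)).congr' ?_
    filter_upwards [self_mem_nhdsWithin] with s (hs : 0 < s)
    rw [hρ.integral_cos_inner hreal hstable hs.le]
  have hzero : μ 1 {x | x ≠ 0} = 0 := ae_iff.mp (ae_eq_zero_of_forall_inner (𝕜 := ℝ) hproj)
  obtain ⟨t, ht, hpos⟩ := hnontriv
  apply hpos
  rw [← Real.rpow_inv_rpow ht hα.ne', hstable _ (by positivity),
    Measure.map_apply (by fun_prop) (measurableSet_singleton 0).compl]
  exact measure_mono_null (fun _ hx => right_ne_zero_of_smul hx) hzero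

end HasLevyExponent

end LevyExponent

theorem symmetric_stable_exponent_form_general
    {H : Type*} [NormedAddCommGroup H] [InnerProductSpace ℝ H]
    [SecondCountableTopology H] [MeasurableSpace H] [BorelSpace H]
    {Ω : Type*} [MeasurableSpace Ω] (P : Measure Ω) [IsProbabilityMeasure P]
    (Y : ℝ → Ω → H) (hY : IsLevyProcess P Y)
    (ρ : H → ℂ) (hρcont : Continuous ρ)
    (hρ : ∀ t : ℝ, 0 ≤ t → ∀ u : H,
      ∫ ω, Complex.exp (Complex.I * ((⟪u, Y t ω⟫ : ℝ) : ℂ)) ∂P = Complex.exp (t * ρ u))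
    (α : ℝ) (hα : 0 < α)
    -- symmetric:
    (hsym : ∀ t : ℝ, 0 ≤ t → Measure.map (Y t) P = Measure.map (fun ω => -(Y t ω)) P)
    -- strictly α-stable:
    (hstable : ∀ t : ℝ, 0 ≤ t →
      Measure.map (Y (t ^ α)) P = Measure.map (fun ω => t • Y 1 ω) P)
    -- nontrivial:
    (hnontriv : ∃ t : ℝ, 0 ≤ t ∧ 0 < P {ω | Y t ω ≠ 0}) :
    α ≤ 2 ∧
    ∃ f : H → ℝ,
      ContinuousOn f (Metric.sphere (0 : H) 1) ∧
      (∀ v ∈ Metric.sphere (0 : H) 1, 0 ≤ f v) ∧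
      (∀ v ∈ Metric.sphere (0 : H) 1, f (-v) = f v) ∧
      (∀ u : H, u ≠ 0 → ρ u = -(((‖u‖ ^ α * f (‖u‖⁻¹ • u) : ℝ)) : ℂ)) ∧
      (∀ u : H, (ρ u).im = 0) ∧ (∀ u : H, (ρ u).re ≤ 0) ∧
      (∀ t : ℝ, 0 ≤ t → ∀ u : H, ρ (t • u) = ((t ^ α : ℝ) : ℂ) * ρ u) := by
  have hmeas := hY.1
  set μ : ℝ → Measure H := fun t => P.map (Y t)
  have (t : ℝ) : IsProbabilityMeasure (μ t) :=
    Measure.isProbabilityMeasure_map (hmeas t).aemeasurable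
  have hρμ : HasLevyExponent μ ρ := fun t ht u => by
    rw [charFun_map_eq_integral (hmeas t).aemeasurable]
    exact hρ t ht u
  have hsymμ : ∀ t : ℝ, 0 ≤ t → (μ t).map Neg.neg = μ t := fun t ht => by
    rw [Measure.map_map measurable_neg (hmeas t)]
    exact (hsym t ht).symm
  have hstableμ : ∀ s : ℝ, 0 ≤ s → μ (s ^ α) = (μ 1).map (s • ·) := fun s hs => by
    rw [Measure.map_map (measurable_const_smul s) (hmeas 1)]
    exact hstable s hs
  have hnontrivμ : ∃ t : ℝ, 0 ≤ t ∧ μ t {0}ᶜ ≠ 0 := by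
    obtain ⟨t, ht, hpos⟩ := hnontriv
    refine ⟨t, ht, ?_⟩
    rw [Measure.map_apply (hmeas t) (measurableSet_singleton 0).compl]
    exact hpos.ne'
  have hreal := hρμ.im_eq_zero hsymμ
  refine ⟨hρμ.le_two hreal hα hstableμ hnontrivμ, fun v => -(ρ v).re,
    (continuous_re.comp hρcont).neg.continuousOn,
    fun v _ => neg_nonneg.mpr (hρμ.re_nonpos v), fun v _ => by simp only [hρμ.apply_neg hreal],
    fun u hu => ?_, hreal, hρμ.re_nonpos, fun t ht u => hρμ.apply_smul hreal hstableμ ht u⟩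
  conv_lhs => rw [← smul_inv_smul₀ (norm_ne_zero_iff.mpr hu) u]
  rw [hρμ.apply_smul hreal hstableμ (norm_nonneg u)]
  apply Complex.ext <;> simp [hreal]

/-- A nontrivial symmetric strictly `α`-stable `H`-valued Lévy process
has `α ∈ (0,2]`, and its Lévy exponent has the form `ρ(u) = −‖u‖^α·f(u/‖u‖)` for a
symmetric continuous nonnegative function `f` on the unit sphere. -/
theorem symmetric_stable_exponent_form
    {H : Type*} [NormedAddCommGroup H] [InnerProductSpace ℝ H] [CompleteSpace H]
    [SecondCountableTopology H] [MeasurableSpace H] [BorelSpace H]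
    {Ω : Type*} [MeasurableSpace Ω] (P : Measure Ω) [IsProbabilityMeasure P]
    (Y : ℝ → Ω → H) (hY : IsLevyProcess P Y)
    (ρ : H → ℂ) (hρcont : Continuous ρ)
    (hρ : ∀ t : ℝ, 0 ≤ t → ∀ u : H,
      ∫ ω, Complex.exp (Complex.I * ((⟪u, Y t ω⟫ : ℝ) : ℂ)) ∂P = Complex.exp (t * ρ u))
    (α : ℝ) (hα : 0 < α)
    -- symmetric:
    (hsym : ∀ t : ℝ, 0 ≤ t → Measure.map (Y t) P = Measure.map (fun ω => -(Y t ω)) P)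
    -- strictly α-stable:
    (hstable : ∀ t : ℝ, 0 ≤ t →
      Measure.map (Y (t ^ α)) P = Measure.map (fun ω => t • Y 1 ω) P)
    -- nontrivial:
    (hnontriv : ∃ t : ℝ, 0 ≤ t ∧ 0 < P {ω | Y t ω ≠ 0}) :
    α ≤ 2 ∧
    ∃ f : H → ℝ,
      ContinuousOn f (Metric.sphere (0 : H) 1) ∧
      (∀ v ∈ Metric.sphere (0 : H) 1, 0 ≤ f v) ∧
      (∀ v ∈ Metric.sphere (0 : H) 1, f (-v) = f v) ∧
      (∀ u : H, u ≠ 0 → ρ u = -(((‖u‖ ^ α * f (‖u‖⁻¹ • u) : ℝ)) : ℂ)) ∧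
      (∀ u : H, (ρ u).im = 0) ∧ (∀ u : H, (ρ u).re ≤ 0) ∧
      (∀ t : ℝ, 0 ≤ t → ∀ u : H, ρ (t • u) = ((t ^ α : ℝ) : ℂ) * ρ u) :=
  symmetric_stable_exponent_form_general P Y hY ρ hρcont hρ α hα hsym hstable hnontriv

end
end

section
/- Let α ∈ (1, 2) and let L be an H-valued Lévy process which is strictly α-stable (L(t^α) and t·L(1) have the same law for all t ≥ 0), integrable (E‖L(1)‖ < ∞) and nontrivial (P(L(1) ≠ 0) > 0). Let Θ be a subordinator independent of L and set X(t) := L(Θ(t)). Then X(1) is (Bochner) integrable if and only if E[Θ(1)^{1/α}] < ∞. -/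
open MeasureTheory ProbabilityTheory Filter Set
open scoped RealInnerProductSpace ENNReal NNReal

noncomputable section

/-!
Since `Θ(1)` is independent of `L`, one may freeze `s = Θ(1)`: `E‖L(Θ(1))‖ = E[g(Θ(1))]` with
`g(s) = E‖L(s)‖`. Strict stability says that `L(s)` has the law of `s^{1/α} L(1)`, so
`g(s) = s^{1/α} E‖L(1)‖`, whence `E‖X(1)‖ = E[Θ(1)^{1/α}] · E‖L(1)‖`, with a last factor that
is finite and nonzero. Freezing needs `(s, ω) ↦ L(s)(ω)` to be jointly measurable for the
σ-algebra generated by `L`; this follows from right continuity of the paths by approximating `s`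
from above by dyadic numbers.
-/

theorem tendsto_ceil_mul_two_pow_div_nhdsGE (r : ℝ) :
    Tendsto (fun n : ℕ => (⌈2 ^ n * r⌉ : ℝ) / 2 ^ n) atTop (nhdsWithin r (Ici r)) := by
  have hpos : ∀ n : ℕ, (0 : ℝ) < 2 ^ n := fun n => by positivity
  have hlow : ∀ n : ℕ, r ≤ (⌈2 ^ n * r⌉ : ℝ) / 2 ^ n := fun n => by
    rw [le_div_iff₀ (hpos n), mul_comm]
    exact Int.le_ceil _
  have hup : ∀ n : ℕ, (⌈2 ^ n * r⌉ : ℝ) / 2 ^ n ≤ r + (1 / 2) ^ n := fun n => by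
    rw [div_le_iff₀ (hpos n), add_mul, ← mul_pow, one_div_mul_cancel two_ne_zero, one_pow]
    linarith [Int.ceil_lt_add_one (2 ^ n * r), mul_comm r (2 ^ n)]
  have hlim : Tendsto (fun n : ℕ => r + (1 / 2 : ℝ) ^ n) atTop (nhds r) := by
    simpa using tendsto_const_nhds.add
      (tendsto_pow_atTop_nhds_zero_of_lt_one (by norm_num : (0 : ℝ) ≤ 1 / 2) (by norm_num))
  exact tendsto_nhdsWithin_iff.2 ⟨tendsto_of_tendsto_of_tendsto_of_le_of_le tendsto_const_nhds
    hlim hlow hup, Eventually.of_forall hlow⟩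

theorem measurable_uncurry_of_continuousWithinAt_Ici {α β : Type*} {mα : MeasurableSpace α}
    [TopologicalSpace β] [TopologicalSpace.PseudoMetrizableSpace β] [MeasurableSpace β]
    [BorelSpace β]
    {u : ℝ → α → β} (hu : ∀ t, Measurable (u t))
    (hrc : ∀ x t, ContinuousWithinAt (u · x) (Ici t) t) :
    Measurable (Function.uncurry u) := by
  refine measurable_of_tendsto_metrizable
    (f := fun n (p : ℝ × α) => u ((⌈2 ^ n * p.1⌉ : ℝ) / 2 ^ n) p.2) (fun n => ?_)
    (tendsto_pi_nhds.2 fun p => (hrc p.2 p.1).tendsto.comp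
      (tendsto_ceil_mul_two_pow_div_nhdsGE p.1))
  have hdyadic : Measurable fun q : α × ℤ => u ((q.2 : ℝ) / 2 ^ n) q.1 :=
    measurable_from_prod_countable_left fun k => hu ((k : ℝ) / 2 ^ n)
  exact hdyadic.comp (measurable_snd.prodMk
    (Int.measurable_ceil.comp (measurable_const.mul measurable_fst)))

theorem measurable_uncurry_max_of_continuousWithinAt_Ici {α β : Type*} {mα : MeasurableSpace α}
    [TopologicalSpace β] [TopologicalSpace.PseudoMetrizableSpace β] [MeasurableSpace β]
    [BorelSpace β]
    {u : ℝ → α → β} (hu : ∀ t, Measurable (u t))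
    (hrc : ∀ x, ∀ t, 0 ≤ t → ContinuousWithinAt (u · x) (Ici t) t) :
    Measurable fun p : ℝ × α => u (max p.1 0) p.2 :=
  measurable_uncurry_of_continuousWithinAt_Ici (u := fun t => u (max t 0)) (fun _ => hu _)
    fun x t => (hrc x (max t 0) (le_max_right _ _)).comp (f := fun s => max s 0)
      (continuous_id.max continuous_const).continuousWithinAt
      fun _ hs => max_le_max_right 0 (mem_Ici.1 hs)

theorem map_prodMk_eq_prod_trim_of_indep {Ω β : Type*} {mβ : MeasurableSpace β}
    {𝓖 mΩ : MeasurableSpace Ω} (h𝓖 : 𝓖 ≤ mΩ) {P : Measure Ω} [IsFiniteMeasure P]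
    {T : Ω → β} (hT : Measurable T) (hind : Indep (mβ.comap T) 𝓖 P) :
    @Measure.map Ω (β × Ω) mΩ (mβ.prod 𝓖) (fun ω => (T ω, ω)) P
      = @Measure.prod β Ω mβ 𝓖 (P.map T) (P.trim h𝓖) := by
  have hmk : @Measurable Ω (β × Ω) mΩ (mβ.prod 𝓖) (fun ω => (T ω, ω)) :=
    hT.prodMk (measurable_id'' h𝓖)
  refine (@Measure.prod_eq β Ω mβ 𝓖 _ _ _ _ _ fun s t hs ht => ?_).symm
  rw [Measure.map_apply hmk (hs.prod ht), Measure.map_apply hT hs, trim_measurableSet_eq h𝓖 ht]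
  exact (Indep_iff _ _ P).1 hind _ _ ⟨s, hs, rfl⟩ ht

theorem lintegral_comp_prodMk_of_indep {Ω β : Type*} {mβ : MeasurableSpace β}
    {𝓖 mΩ : MeasurableSpace Ω} (h𝓖 : 𝓖 ≤ mΩ) {P : Measure Ω} [IsFiniteMeasure P]
    {T : Ω → β} (hT : Measurable T) (hind : Indep (mβ.comap T) 𝓖 P)
    {F : β × Ω → ℝ≥0∞} (hF : Measurable[mβ.prod 𝓖] F) :
    ∫⁻ ω, F (T ω, ω) ∂P = ∫⁻ b, ∫⁻ ω, F (b, ω) ∂P ∂(P.map T) := by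
  have hmk : @Measurable Ω (β × Ω) mΩ (mβ.prod 𝓖) (fun ω => (T ω, ω)) :=
    hT.prodMk (measurable_id'' h𝓖)
  calc ∫⁻ ω, F (T ω, ω) ∂P
      = @lintegral (β × Ω) (mβ.prod 𝓖)
          (@Measure.prod β Ω mβ 𝓖 (P.map T) (P.trim h𝓖)) F := by
        rw [← map_prodMk_eq_prod_trim_of_indep h𝓖 hT hind,
          @lintegral_map Ω (β × Ω) mΩ (mβ.prod 𝓖) P F _ hF hmk]
    _ = ∫⁻ b, ∫⁻ ω, F (b, ω) ∂(P.trim h𝓖) ∂(P.map T) :=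
        @lintegral_prod β Ω mβ 𝓖 _ _ _ F hF.aemeasurable
    _ = ∫⁻ b, ∫⁻ ω, F (b, ω) ∂P ∂(P.map T) :=
        lintegral_congr fun b => lintegral_trim h𝓖 (hF.comp measurable_prodMk_left)

theorem lintegral_enorm_comp_max_of_indepFun {Ω E : Type*} {mΩ : MeasurableSpace Ω}
    [TopologicalSpace E] [TopologicalSpace.PseudoMetrizableSpace E] [ContinuousENorm E]
    [MeasurableSpace E] [BorelSpace E] {P : Measure Ω} [IsFiniteMeasure P]
    {u : ℝ → Ω → E} (hu : ∀ t, Measurable (u t))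
    (hrc : ∀ ω, ∀ t, 0 ≤ t → ContinuousWithinAt (u · ω) (Ici t) t)
    {T : Ω → ℝ} (hT : Measurable T) (hind : IndepFun T (fun ω t => u t ω) P) :
    ∫⁻ ω, ‖u (max (T ω) 0) ω‖ₑ ∂P = ∫⁻ s, ∫⁻ ω, ‖u (max s 0) ω‖ₑ ∂P ∂(P.map T) := by
  have hpath : Measurable fun ω t => u t ω := measurable_pi_lambda _ hu
  set 𝓖 : MeasurableSpace Ω := MeasurableSpace.pi.comap fun ω t => u t ω
  have hu𝓖 : ∀ t, Measurable[𝓖] (u t) := fun t =>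
    (measurable_pi_apply t).comp (comap_measurable (fun ω t => u t ω))
  exact lintegral_comp_prodMk_of_indep hpath.comap_le hT hind
    (@measurable_uncurry_max_of_continuousWithinAt_Ici Ω E 𝓖 _ _ _ _ u hu𝓖 hrc).enorm

theorem lintegral_enorm_eq_of_map_eq_smul {Ω 𝕜 E : Type*} {mΩ : MeasurableSpace Ω}
    [NormedField 𝕜] [NormedAddCommGroup E] [NormedSpace 𝕜 E] [MeasurableSpace E]
    [BorelSpace E]
    {P : Measure Ω} {X Y : Ω → E} (hX : AEMeasurable X P) (hY : AEMeasurable Y P) (c : 𝕜)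
    (h : P.map X = P.map fun ω => c • Y ω) :
    ∫⁻ ω, ‖X ω‖ₑ ∂P = ‖c‖ₑ * ∫⁻ ω, ‖Y ω‖ₑ ∂P :=
  calc ∫⁻ ω, ‖X ω‖ₑ ∂P
      = ∫⁻ x, ‖x‖ₑ ∂(P.map X) := (lintegral_map' measurable_enorm.aemeasurable hX).symm
    _ = ∫⁻ ω, ‖c • Y ω‖ₑ ∂P := by
        rw [h]
        exact lintegral_map' measurable_enorm.aemeasurable (hY.const_smul c)
    _ = ‖c‖ₑ * ∫⁻ ω, ‖Y ω‖ₑ ∂P := by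
        simp_rw [enorm_smul]
        exact lintegral_const_mul'' _ hY.enorm

theorem lintegral_enorm_eq_rpow_mul_of_strictlyStable {Ω E : Type*} {mΩ : MeasurableSpace Ω}
    [NormedAddCommGroup E] [NormedSpace ℝ E] [MeasurableSpace E] [BorelSpace E]
    {P : Measure Ω} {α : ℝ} (hα : α ≠ 0) {L : ℝ → Ω → E} (hL : ∀ t, Measurable (L t))
    (hstable : ∀ t : ℝ, 0 ≤ t → P.map (L (t ^ α)) = P.map fun ω => t • L 1 ω)
    {s : ℝ} (hs : 0 ≤ s) :
    ∫⁻ ω, ‖L s ω‖ₑ ∂P = ‖s ^ (1 / α)‖ₑ * ∫⁻ ω, ‖L 1 ω‖ₑ ∂P := by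
  refine lintegral_enorm_eq_of_map_eq_smul (hL s).aemeasurable (hL 1).aemeasurable _ ?_
  rw [← hstable _ (Real.rpow_nonneg hs _), ← Real.rpow_mul hs, one_div_mul_cancel hα,
    Real.rpow_one]

theorem lintegral_enorm_subordinate_eq_mul_of_strictlyStable {Ω E : Type*}
    {mΩ : MeasurableSpace Ω} [NormedAddCommGroup E] [NormedSpace ℝ E] [MeasurableSpace E]
    [BorelSpace E] {P : Measure Ω} [IsFiniteMeasure P] {α : ℝ} (hα : α ≠ 0)
    {L : ℝ → Ω → E} (hL : ∀ t, Measurable (L t))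
    (hrc : ∀ ω, ∀ t, 0 ≤ t → ContinuousWithinAt (L · ω) (Ici t) t)
    (hstable : ∀ t : ℝ, 0 ≤ t → P.map (L (t ^ α)) = P.map fun ω => t • L 1 ω)
    {T : Ω → ℝ} (hT : Measurable T) (hT0 : ∀ᵐ ω ∂P, 0 ≤ T ω)
    (hind : IndepFun T (fun ω t => L t ω) P) :
    ∫⁻ ω, ‖L (T ω) ω‖ₑ ∂P = (∫⁻ ω, ‖T ω ^ (1 / α)‖ₑ ∂P) * ∫⁻ ω, ‖L 1 ω‖ₑ ∂P := by
  have hmax : ∀ᵐ ω ∂P, max (T ω) 0 = T ω := hT0.mono fun ω h => max_eq_left h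
  have hg : Measurable fun s : ℝ => ‖max s 0 ^ (1 / α)‖ₑ := by fun_prop
  calc ∫⁻ ω, ‖L (T ω) ω‖ₑ ∂P
      = ∫⁻ ω, ‖L (max (T ω) 0) ω‖ₑ ∂P :=
        lintegral_congr_ae (hmax.mono fun ω h => by simp only [h])
    _ = ∫⁻ s, ∫⁻ ω, ‖L (max s 0) ω‖ₑ ∂P ∂(P.map T) :=
        lintegral_enorm_comp_max_of_indepFun hL hrc hT hind
    _ = ∫⁻ s, ‖max s 0 ^ (1 / α)‖ₑ * ∫⁻ ω, ‖L 1 ω‖ₑ ∂P ∂(P.map T) :=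
        lintegral_congr fun s =>
          lintegral_enorm_eq_rpow_mul_of_strictlyStable hα hL hstable (le_max_right _ _)
    _ = (∫⁻ ω, ‖max (T ω) 0 ^ (1 / α)‖ₑ ∂P) * ∫⁻ ω, ‖L 1 ω‖ₑ ∂P := by
        rw [lintegral_map (hg.mul_const _) hT]
        exact lintegral_mul_const _ (hg.comp hT)
    _ = (∫⁻ ω, ‖T ω ^ (1 / α)‖ₑ ∂P) * ∫⁻ ω, ‖L 1 ω‖ₑ ∂P := by
        congr 1
        exact lintegral_congr_ae (hmax.mono fun ω h => by simp only [h])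

theorem stable_subordination_integrability_general
    {H : Type*} [NormedAddCommGroup H] [InnerProductSpace ℝ H]
    [SecondCountableTopology H] [MeasurableSpace H] [BorelSpace H]
    {Ω : Type*} [MeasurableSpace Ω] (P : Measure Ω) [IsProbabilityMeasure P]
    (α : ℝ) (hα1 : 1 < α)
    (L : ℝ → Ω → H) (hL : IsLevyProcess P L)
    -- strictly α-stable:
    (hstable : ∀ t : ℝ, 0 ≤ t →
      Measure.map (L (t ^ α)) P = Measure.map (fun ω => t • L 1 ω) P)
    (hLint : Integrable (L 1) P)
    -- nontrivial:
    (hnontriv : 0 < P {ω | L 1 ω ≠ 0})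
    -- a subordinator Θ, independent of L:
    (Θ : ℝ → Ω → ℝ) (hΘ : IsLevyProcess P Θ)
    (hΘmono : ∀ᵐ ω ∂P, MonotoneOn (fun t => Θ t ω) (Set.Ici 0))
    (hΘL : IndepFun (fun ω => fun t : ℝ => Θ t ω) (fun ω => fun t : ℝ => L t ω) P) :
    Integrable (fun ω => L (Θ 1 ω) ω) P ↔ Integrable (fun ω => Θ 1 ω ^ (1 / α)) P := by
  obtain ⟨hLmeas, -, hLcadlag, -⟩ := hL
  have hrc : ∀ ω, ∀ t, 0 ≤ t → ContinuousWithinAt (L · ω) (Ici t) t :=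
    fun ω => (hLcadlag ω).1
  have hΘ1 : Measurable (Θ 1) := hΘ.1 1
  have hΘ1_nonneg : ∀ᵐ ω ∂P, 0 ≤ Θ 1 ω := by
    filter_upwards [hΘ.2.1, hΘmono] with ω h0 hmono
    simpa [h0] using hmono self_mem_Ici (mem_Ici.2 zero_le_one) zero_le_one
  have key := lintegral_enorm_subordinate_eq_mul_of_strictlyStable
    (zero_lt_one.trans hα1).ne' hLmeas hrc hstable hΘ1 hΘ1_nonneg
    (hΘL.comp (measurable_pi_apply 1) measurable_id)
  have hc0 : ∫⁻ ω, ‖L 1 ω‖ₑ ∂P ≠ 0 := by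
    rw [Ne, lintegral_eq_zero_iff (hLmeas 1).enorm]
    exact fun h => hnontriv.ne' (ae_iff.1 (h.mono fun ω hω => by simpa using hω))
  have hX : AEStronglyMeasurable (fun ω => L (Θ 1 ω) ω) P :=
    ((measurable_uncurry_max_of_continuousWithinAt_Ici hLmeas hrc).comp
      (hΘ1.prodMk measurable_id)).aestronglyMeasurable.congr
      (hΘ1_nonneg.mono fun ω h => by simp only [Function.comp_apply, id_eq, max_eq_left h])
  have hY : AEStronglyMeasurable (fun ω => Θ 1 ω ^ (1 / α)) P :=
    (hΘ1.pow_const _).aestronglyMeasurable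
  simp only [Integrable, hX, hY, true_and, HasFiniteIntegral, key]
  exact ⟨fun h => ENNReal.lt_top_of_mul_ne_top_left h.ne hc0,
    fun h => ENNReal.mul_lt_top h hLint.2⟩

/-- For `α ∈ (1,2)` and a nontrivial integrable strictly `α`-stable
`H`-valued Lévy process `L` subordinated by an independent subordinator `Θ`, the process
`X(1) = L(Θ(1))` is integrable iff `E[Θ(1)^{1/α}] < ∞`. -/
theorem stable_subordination_integrability
    {H : Type*} [NormedAddCommGroup H] [InnerProductSpace ℝ H] [CompleteSpace H]
    [SecondCountableTopology H] [MeasurableSpace H] [BorelSpace H]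
    {Ω : Type*} [MeasurableSpace Ω] (P : Measure Ω) [IsProbabilityMeasure P]
    (α : ℝ) (hα1 : 1 < α) (hα2 : α < 2)
    (L : ℝ → Ω → H) (hL : IsLevyProcess P L)
    -- strictly α-stable:
    (hstable : ∀ t : ℝ, 0 ≤ t →
      Measure.map (L (t ^ α)) P = Measure.map (fun ω => t • L 1 ω) P)
    (hLint : Integrable (L 1) P)
    -- nontrivial:
    (hnontriv : 0 < P {ω | L 1 ω ≠ 0})
    -- a subordinator Θ, independent of L:
    (Θ : ℝ → Ω → ℝ) (hΘ : IsLevyProcess P Θ)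
    (hΘmono : ∀ᵐ ω ∂P, MonotoneOn (fun t => Θ t ω) (Set.Ici 0))
    (hΘL : IndepFun (fun ω => fun t : ℝ => Θ t ω) (fun ω => fun t : ℝ => L t ω) P) :
    Integrable (fun ω => L (Θ 1 ω) ω) P ↔ Integrable (fun ω => Θ 1 ω ^ (1 / α)) P :=
  stable_subordination_integrability_general P α hα1 L hL hstable hLint hnontriv Θ hΘ hΘmono hΘL

end
end

section
/- Let H be a separable real Hilbert space, ν_2 a finite Borel measure on H, and μ_2 := e^{−ν_2(H)}·Σ_{n=0}^∞ ν_2^{*n}/n! the associated compound Poisson probability measure. Let μ_1 be any Borel probability measure on H and let g : H → ℝ_+ be measurable and submultiplicative (g(x + y) ≤ a·g(x)·g(y) for some a > 0 and all x, y). If ∫_H g d(μ_1 * μ_2) < ∞ (equivalently, ∫_H ∫_H g(x + y) μ_2(dy) μ_1(dx) < ∞), then ∫_H g dν_2 < ∞. -/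
open MeasureTheory ProbabilityTheory Filter Set
open scoped RealInnerProductSpace ENNReal NNReal

noncomputable section

/-- Convolution of two (finite Borel) measures on an additive group:
`(α ∗ β)(B) = ∫ β(B − x) α(dx)`, realised as the pushforward of the product measure
under addition. -/
def mconv {G : Type*} [MeasurableSpace G] [Add G] (μ ν : Measure G) : Measure G :=
  Measure.map (fun p : G × G => p.1 + p.2) (μ.prod ν)

/-- Convolution powers of a measure: `ν^{*0} = δ_0`, `ν^{*(n+1)} = ν ∗ ν^{*n}`. -/
def convPow {G : Type*} [MeasurableSpace G] [Add G] [Zero G] (ν : Measure G) : ℕ → Measure G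
  | 0 => Measure.dirac 0
  | n + 1 => mconv ν (convPow ν n)

/-- The compound Poisson distribution at time `t` generated by a finite measure `ν`:
`e^{−t·ν(G)}·Σ_{n≥0} (tⁿ/n!)·ν^{*n}`. -/
def cpoisson {G : Type*} [MeasurableSpace G] [Add G] [Zero G] (ν : Measure G) (t : ℝ) :
    Measure G :=
  ENNReal.ofReal (Real.exp (-(t * (ν Set.univ).toReal))) •
    Measure.sum fun n : ℕ => ENNReal.ofReal (t ^ n / n.factorial) • convPow ν n

/-- The exponential function on `ℝ≥0∞` (with `eexp ⊤ = ⊤`), given by the usual power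
series; it agrees with `Real.exp` on finite values. -/
def eexp (x : ℝ≥0∞) : ℝ≥0∞ := ∑' n : ℕ, x ^ n / (n.factorial : ℝ≥0∞)

/-! Fix a point `x₀` at which `y ↦ ∫ g(x₀ + y) μ₂(dy)` is finite; one exists because its
`μ₁`-integral is `∫ g d(μ₁ ∗ μ₂) < ∞`. Submultiplicativity gives `g y ≤ a g(-x₀) g(x₀ + y)`, so
`∫ g dμ₂ < ∞`. Finally the `n = 1` term of the compound Poisson series shows
`μ₂ ≥ e^{-ν₂(H)} ν₂`, hence `∫ g dν₂ < ∞`. -/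

section Convolution

variable {G : Type*} [MeasurableSpace G]

instance [Add G] (μ ν : Measure G) [SFinite μ] [SFinite ν] : SFinite (mconv μ ν) := by
  unfold mconv; infer_instance

instance [Add G] [Zero G] (ν : Measure G) [SFinite ν] (n : ℕ) : SFinite (convPow ν n) := by
  induction n with
  | zero => unfold convPow; infer_instance
  | succ n ih => unfold convPow; infer_instance

instance [Add G] [Zero G] (ν : Measure G) [SFinite ν] (t : ℝ) : SFinite (cpoisson ν t) := by
  unfold cpoisson; infer_instance

lemma smul_convPow_le_cpoisson [Add G] [Zero G] (ν : Measure G) (t : ℝ) (n : ℕ) :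
    (ENNReal.ofReal (Real.exp (-(t * (ν Set.univ).toReal))) * ENNReal.ofReal (t ^ n / n.factorial))
      • convPow ν n ≤ cpoisson ν t := by
  rw [cpoisson, mul_smul]
  gcongr
  exact Measure.le_sum (fun n : ℕ => _ • convPow ν n) n

lemma lintegral_mconv [Add G] [MeasurableAdd₂ G] (μ ν : Measure G) [SFinite ν] {f : G → ℝ≥0∞}
    (hf : Measurable f) :
    ∫⁻ x, f x ∂(mconv μ ν) = ∫⁻ x, ∫⁻ y, f (x + y) ∂ν ∂μ := by
  rw [mconv, lintegral_map hf measurable_add]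
  exact lintegral_prod _ (hf.comp measurable_add).aemeasurable

variable [AddZeroClass G] [MeasurableAdd₂ G]

lemma convPow_one (ν : Measure G) [SFinite ν] : convPow ν 1 = ν := by
  simp only [convPow, mconv, Measure.prod_dirac]
  rw [Measure.map_map measurable_add measurable_prodMk_right]
  simp only [Function.comp_def, add_zero, Measure.map_id']

lemma lintegral_lt_top_of_lintegral_cpoisson_lt_top (ν : Measure G) [SFinite ν] {t : ℝ}
    (ht : 0 < t) {f : G → ℝ≥0∞} (hf : ∫⁻ x, f x ∂(cpoisson ν t) < ⊤) : ∫⁻ x, f x ∂ν < ⊤ := by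
  set c := ENNReal.ofReal (Real.exp (-(t * (ν Set.univ).toReal))) * ENNReal.ofReal t
  have hc : c ≠ 0 := by simp [c, ht, Real.exp_pos]
  have hle : c * ∫⁻ x, f x ∂ν ≤ ∫⁻ x, f x ∂(cpoisson ν t) := by
    rw [← smul_eq_mul, ← lintegral_smul_measure]
    simpa [convPow_one] using lintegral_mono' (smul_convPow_le_cpoisson ν t 1) le_rfl
  exact ENNReal.lt_top_of_mul_ne_top_right (hle.trans_lt hf).ne hc

end Convolution

section Submultiplicative

variable {G : Type*} [MeasurableSpace G] [AddGroup G] {g : G → ℝ≥0} {a : ℝ≥0}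

lemma lintegral_lt_top_of_lintegral_add_lt_top (hsub : ∀ x y, g (x + y) ≤ a * g x * g y)
    {ν : Measure G} {x₀ : G} (hx₀ : ∫⁻ y, (g (x₀ + y) : ℝ≥0∞) ∂ν < ⊤) :
    ∫⁻ y, (g y : ℝ≥0∞) ∂ν < ⊤ :=
  calc ∫⁻ y, (g y : ℝ≥0∞) ∂ν ≤ ∫⁻ y, (a * g (-x₀) : ℝ≥0) * (g (x₀ + y) : ℝ≥0∞) ∂ν := by
        refine lintegral_mono fun y => ?_
        have := hsub (-x₀) (x₀ + y)
        rw [neg_add_cancel_left] at this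
        rw [← ENNReal.coe_mul]
        exact ENNReal.coe_le_coe.mpr this
    _ = (a * g (-x₀) : ℝ≥0) * ∫⁻ y, (g (x₀ + y) : ℝ≥0∞) ∂ν :=
        lintegral_const_mul' _ _ ENNReal.coe_ne_top
    _ < ⊤ := ENNReal.mul_lt_top ENNReal.coe_lt_top hx₀

variable [MeasurableAdd₂ G]

lemma exists_lintegral_add_lt_top_of_lintegral_mconv_lt_top (μ ν : Measure G) [NeZero μ]
    [SFinite ν] {f : G → ℝ≥0∞} (hf : Measurable f) (h : ∫⁻ x, f x ∂(mconv μ ν) < ⊤) :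
    ∃ x₀, ∫⁻ y, f (x₀ + y) ∂ν < ⊤ := by
  rw [lintegral_mconv μ ν hf] at h
  have hmeas : Measurable fun x => ∫⁻ y, f (x + y) ∂ν :=
    (hf.comp measurable_add).lintegral_prod_right'
  exact (ae_lt_top hmeas h.ne).exists

lemma lintegral_lt_top_of_lintegral_mconv_lt_top (hsub : ∀ x y, g (x + y) ≤ a * g x * g y)
    (hg : Measurable g) (μ ν : Measure G) [NeZero μ] [SFinite ν]
    (h : ∫⁻ x, (g x : ℝ≥0∞) ∂(mconv μ ν) < ⊤) : ∫⁻ y, (g y : ℝ≥0∞) ∂ν < ⊤ :=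
  have ⟨_, hx₀⟩ := exists_lintegral_add_lt_top_of_lintegral_mconv_lt_top μ ν
    hg.coe_nnreal_ennreal h
  lintegral_lt_top_of_lintegral_add_lt_top hsub hx₀

end Submultiplicative

theorem finite_levy_integral_of_finite_convolution_integral_general
    {H : Type*} [NormedAddCommGroup H]
    [SecondCountableTopology H] [MeasurableSpace H] [BorelSpace H]
    (ν₂ : Measure H) [IsFiniteMeasure ν₂]
    (μ₁ : Measure H) [IsProbabilityMeasure μ₁]
    (g : H → ℝ≥0) (hg : Measurable g)
    (a : ℝ≥0) (hsub : ∀ x y : H, g (x + y) ≤ a * g x * g y)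
    (h : ∫⁻ x, (g x : ℝ≥0∞) ∂(mconv μ₁ (cpoisson ν₂ 1)) < ⊤) :
    ∫⁻ x, (g x : ℝ≥0∞) ∂ν₂ < ⊤ :=
  lintegral_lt_top_of_lintegral_cpoisson_lt_top ν₂ one_pos <|
    lintegral_lt_top_of_lintegral_mconv_lt_top hsub hg μ₁ _ h

/-- If `g` is submultiplicative and `∫ g d(μ₁ ∗ μ₂) < ∞`, where `μ₂` is
the compound Poisson probability measure generated by a finite measure `ν₂` and `μ₁` is
any probability measure, then `∫ g dν₂ < ∞`. -/
theorem finite_levy_integral_of_finite_convolution_integral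
    {H : Type*} [NormedAddCommGroup H] [InnerProductSpace ℝ H] [CompleteSpace H]
    [SecondCountableTopology H] [MeasurableSpace H] [BorelSpace H]
    (ν₂ : Measure H) [IsFiniteMeasure ν₂]
    (μ₁ : Measure H) [IsProbabilityMeasure μ₁]
    (g : H → ℝ≥0) (hg : Measurable g)
    (a : ℝ≥0) (ha : 0 < a) (hsub : ∀ x y : H, g (x + y) ≤ a * g x * g y)
    (h : ∫⁻ x, (g x : ℝ≥0∞) ∂(mconv μ₁ (cpoisson ν₂ 1)) < ⊤) :
    ∫⁻ x, (g x : ℝ≥0∞) ∂ν₂ < ⊤ :=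
  finite_levy_integral_of_finite_convolution_integral_general ν₂ μ₁ g hg a hsub h

end
end
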